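/- arXiv:2208.07388 — 2 statements merged into one kernel-verified Lean document; each statement's English description precedes it below -/
import Mathlib

section
/- Let u be a strongly continuous one-parameter unitary group on a Hilbert space H with selfadjoint generator A (so u(t) = exp(itA)). Then the domain of A equals the set of x ∈ H such that limsup_{t→0} ‖(u(t) − 1)x‖/|t| < ∞. -/
open Filter Topology

/-- A one-parameter unitary group on a complex Hilbert space `H`. -/
def IsOneParamUnitaryGroup {H : Type*} [NormedAddCommGroup H] [InnerProductSpace ℂ H]
    [CompleteSpace H] (U : ℝ → (H →L[ℂ] H)) : Prop :=
  U 0 = 1 ∧ (∀ s t : ℝ, U (s + t) = U s * U t) ∧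
    (∀ t : ℝ, U t ∈ unitary (H →L[ℂ] H)) ∧ ∀ x : H, Continuous fun t : ℝ => U t x

/-- `A` is the (selfadjoint, generally unbounded) generator of the one-parameter unitary
group `u`, i.e. `u(t) = exp(itA)` in the sense of Stone's theorem: the domain of `A` is
exactly the set of `x` for which `t ↦ t⁻¹ (u(t)x − x)` converges as `t → 0`, and on the
domain this limit equals `i A x`. -/
def IsGenerator {H : Type*} [NormedAddCommGroup H] [InnerProductSpace ℂ H]
    [CompleteSpace H] (u : ℝ → (H →L[ℂ] H)) (A : H →ₗ.[ℂ] H) : Prop :=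
  (∀ x : H, x ∈ A.domain ↔
      ∃ L : H, Tendsto (fun t : ℝ => (t : ℂ)⁻¹ • (u t x - x)) (𝓝[≠] (0 : ℝ)) (𝓝 L)) ∧
    ∀ (x : H) (hx : x ∈ A.domain),
      Tendsto (fun t : ℝ => (t : ℂ)⁻¹ • (u t x - x)) (𝓝[≠] (0 : ℝ))
        (𝓝 (Complex.I • A ⟨x, hx⟩))

/-!
If `x ∈ dom A`, the difference quotients converge and hence are bounded.
Conversely, if `‖u(t)x − x‖ ≤ C |t|` near `0`, then for `y ∈ dom A`, moving the difference
quotient of `y` across the inner product with `u(t)* = u(−t)` gives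
`|⟪x, A y⟫| = lim |⟪t⁻¹ (u(−t)x − x), y⟫| ≤ C ‖y‖`. So `y ↦ ⟪x, A y⟫` is bounded,
i.e. `x ∈ dom A* = dom A`.
-/

lemma tendsto_neg_nhdsNE_zero {G : Type*} [AddGroup G] [TopologicalSpace G] [ContinuousNeg G] :
    Tendsto Neg.neg (𝓝[≠] (0 : G)) (𝓝[≠] 0) := by
  have h := (Homeomorph.neg G).map_punctured_nhds_eq 0
  rw [Homeomorph.coe_neg, neg_zero] at h
  exact h.le

lemma norm_ofReal_inv_smul {E : Type*} [SeminormedAddCommGroup E] [NormedSpace ℂ E]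
    (t : ℝ) (v : E) : ‖(t : ℂ)⁻¹ • v‖ = ‖v‖ / |t| := by
  rw [norm_smul, norm_inv, Complex.norm_real, Real.norm_eq_abs, div_eq_inv_mul]

section

variable {H : Type*} [NormedAddCommGroup H] [InnerProductSpace ℂ H] [CompleteSpace H]
  {u : ℝ → (H →L[ℂ] H)}

namespace IsOneParamUnitaryGroup

lemma star_eq (hu : IsOneParamUnitaryGroup u) (t : ℝ) : star (u t) = u (-t) := by
  obtain ⟨hu0, hadd, huni, -⟩ := hu
  have hright : u t * u (-t) = 1 := by rw [← hadd, add_neg_cancel, hu0]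
  calc star (u t) = star (u t) * (u t * u (-t)) := by rw [hright, mul_one]
    _ = u (-t) := by rw [← mul_assoc, Unitary.star_mul_self_of_mem (huni t), one_mul]

lemma inner_apply_right (hu : IsOneParamUnitaryGroup u) (t : ℝ) (x y : H) :
    inner ℂ x (u t y) = inner ℂ (u (-t) x) y := by
  rw [← hu.star_eq, ContinuousLinearMap.star_eq_adjoint, ContinuousLinearMap.adjoint_inner_left]

lemma inner_diffQuot_right (hu : IsOneParamUnitaryGroup u) (t : ℝ) (x y : H) :
    inner ℂ x ((t : ℂ)⁻¹ • (u t y - y)) = inner ℂ ((t : ℂ)⁻¹ • (u (-t) x - x)) y := by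
  rw [inner_smul_right, inner_smul_left, inner_sub_right, inner_sub_left, hu.inner_apply_right,
    Complex.conj_inv, Complex.conj_ofReal]

end IsOneParamUnitaryGroup

namespace IsGenerator

variable {A : H →ₗ.[ℂ] H}

lemma isBoundedUnder_of_mem_domain (hgen : IsGenerator u A) {x : H} (hx : x ∈ A.domain) :
    IsBoundedUnder (· ≤ ·) (𝓝[≠] (0 : ℝ)) fun t : ℝ => ‖u t x - x‖ / |t| := by
  simpa only [norm_ofReal_inv_smul] using (hgen.2 x hx).norm.isBoundedUnder_le

lemma norm_inner_apply_le (hu : IsOneParamUnitaryGroup u) (hgen : IsGenerator u A) {x : H}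
    {C : ℝ} (hC : ∀ᶠ t in 𝓝[≠] (0 : ℝ), ‖u t x - x‖ / |t| ≤ C) (y : A.domain) :
    ‖inner ℂ x (A y)‖ ≤ C * ‖(y : H)‖ := by
  have hlim : Tendsto (fun t : ℝ => inner ℂ x ((t : ℂ)⁻¹ • (u t y - y))) (𝓝[≠] 0)
      (𝓝 (inner ℂ x (Complex.I • A y))) :=
    tendsto_const_nhds.inner (hgen.2 y y.2)
  have hbound : ∀ᶠ t : ℝ in 𝓝[≠] 0, ‖inner ℂ x ((t : ℂ)⁻¹ • (u t y - y))‖ ≤ C * ‖(y : H)‖ := by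
    filter_upwards [tendsto_neg_nhdsNE_zero.eventually hC] with t ht
    rw [hu.inner_diffQuot_right]
    refine (norm_inner_le_norm _ _).trans (mul_le_mul_of_nonneg_right ?_ (norm_nonneg _))
    rwa [norm_ofReal_inv_smul, ← abs_neg]
  simpa only [inner_smul_right, norm_mul, Complex.norm_I, one_mul] using
    le_of_tendsto hlim.norm hbound

lemma mem_adjoint_domain_of_isBoundedUnder (hu : IsOneParamUnitaryGroup u)
    (hgen : IsGenerator u A) {x : H}
    (hx : IsBoundedUnder (· ≤ ·) (𝓝[≠] (0 : ℝ)) fun t : ℝ => ‖u t x - x‖ / |t|) :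
    x ∈ A.adjoint.domain := by
  obtain ⟨C, hC⟩ := hx
  rw [LinearPMap.mem_adjoint_domain_iff]
  exact AddMonoidHomClass.continuous_of_bound _ C (hgen.norm_inner_apply_le hu hC)

end IsGenerator

end

/-- If `u` is a strongly continuous one-parameter unitary group with
selfadjoint generator `A`, then `dom A` is exactly the set of `x` such that
`limsup_{t→0} ‖(u(t) − 1)x‖/|t| < ∞`. -/
theorem domain_generator_eq {H : Type*} [NormedAddCommGroup H] [InnerProductSpace ℂ H]
    [CompleteSpace H] (u : ℝ → (H →L[ℂ] H)) (hu : IsOneParamUnitaryGroup u)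
    (A : H →ₗ.[ℂ] H) (hA : IsSelfAdjoint A) (hgen : IsGenerator u A) :
    (A.domain : Set H) =
      {x : H | IsBoundedUnder (· ≤ ·) (𝓝[≠] (0 : ℝ)) fun t : ℝ => ‖u t x - x‖ / |t|} := by
  ext x
  refine ⟨hgen.isBoundedUnder_of_mem_domain, fun hx => ?_⟩
  have hdom : A.adjoint.domain = A.domain := congrArg LinearPMap.domain hA
  exact hdom ▸ hgen.mem_adjoint_domain_of_isBoundedUnder hu hx
end

section
/- Let u be a one-parameter unitary group with generator A, and let x ∈ H satisfy limsup_{t→0} ‖(u(t) − 1)x‖/|t| < ∞. Then for every y in the domain of A, |⟨x, Ay⟩| ≤ (limsup_{t→0} ‖(u(t) − 1)x‖/|t|) · ‖y‖, and consequently x ∈ dom A* = dom A. -/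
/-!
For `y ∈ dom A` the generator is the limit `A y = -i lim_{t→0} t⁻¹ (u(t) y - y)`. Since
`u(-t) = u(t)*`, the difference quotient at `-t` pairs with `x` as
`⟪x, (-t)⁻¹ (u(-t) y - y)⟫ = -t⁻¹ ⟪u(t) x - x, y⟫`, whose modulus is at most
`‖u(t) x - x‖ / |t| · ‖y‖`; passing to the limit gives the bound by the limsup. A bound
`|⟪x, A y⟫| ≤ C ‖y‖` says exactly that `x ∈ dom A*`, and `A* = A`.
-/

open Filter Topology

theorem tendsto_neg_nhdsNE {G : Type*} [TopologicalSpace G] [InvolutiveNeg G] [ContinuousNeg G]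
    (a : G) : Tendsto Neg.neg (𝓝[≠] a) (𝓝[≠] (-a)) :=
  tendsto_nhdsWithin_of_tendsto_nhds_of_eventually_within _
    ((continuous_neg.tendsto a).mono_left nhdsWithin_le_nhds)
    (by filter_upwards [self_mem_nhdsWithin] with t ht using neg_injective.ne ht)

theorem le_limsup_mul_of_tendsto {α : Type*} {l : Filter α} [l.NeBot] {f g : α → ℝ} {a c : ℝ}
    (hg : Tendsto g l (𝓝 a)) (hf : IsBoundedUnder (· ≤ ·) l f) (hc : 0 ≤ c)
    (hgf : ∀ᶠ t in l, g t ≤ f t * c) : a ≤ limsup f l * c := by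
  refine le_of_forall_gt_imp_ge_of_dense fun b hb => le_of_tendsto hg ?_
  have hfc : ∀ᶠ t in l, f t * c < b := by
    rcases hc.eq_or_lt with rfl | hc
    · simpa using hb
    · filter_upwards [eventually_lt_of_limsup_lt ((lt_div_iff₀ hc).2 hb) hf] with t ht
      exact (lt_div_iff₀ hc).1 ht
  filter_upwards [hgf, hfc] with t hgt hft using hgt.trans hft.le

theorem LinearPMap.mem_adjoint_domain_of_norm_inner_le {𝕜 E F : Type*} [RCLike 𝕜]
    [NormedAddCommGroup E] [InnerProductSpace 𝕜 E] [NormedAddCommGroup F]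
    [InnerProductSpace 𝕜 F] [CompleteSpace E] {T : E →ₗ.[𝕜] F} {y : F} (C : ℝ)
    (h : ∀ x : T.domain, ‖(inner 𝕜 y (T x) : 𝕜)‖ ≤ C * ‖x‖) : y ∈ T.adjoint.domain :=
  (T.mem_adjoint_domain_iff y).2 <|
    AddMonoidHomClass.continuous_of_bound ((innerₛₗ 𝕜 y).comp T.toFun) C h

section

variable {H : Type*} [NormedAddCommGroup H] [InnerProductSpace ℂ H] [CompleteSpace H]
  {u : ℝ → (H →L[ℂ] H)}

theorem IsOneParamUnitaryGroup.apply_neg (hu : IsOneParamUnitaryGroup u) (t : ℝ) :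
    u (-t) = ContinuousLinearMap.adjoint (u t) := by
  obtain ⟨hu0, hadd, hunitary, -⟩ := hu
  have hinv : u t * u (-t) = 1 := by rw [← hadd, add_neg_cancel, hu0]
  rw [← ContinuousLinearMap.star_eq_adjoint, ← one_mul (u (-t)),
    ← (Unitary.mem_iff.mp (hunitary t)).1, mul_assoc, hinv, mul_one]

theorem IsOneParamUnitaryGroup.inner_apply_neg_sub_self (hu : IsOneParamUnitaryGroup u)
    (t : ℝ) (x y : H) :
    (inner ℂ x (u (-t) y - y) : ℂ) = inner ℂ (u t x - x) y := by
  rw [inner_sub_right, inner_sub_left, hu.apply_neg, ContinuousLinearMap.adjoint_inner_right]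

theorem IsOneParamUnitaryGroup.norm_inner_diffQuot_neg_le (hu : IsOneParamUnitaryGroup u)
    (t : ℝ) (x y : H) :
    ‖(inner ℂ x (((-t : ℝ) : ℂ)⁻¹ • (u (-t) y - y)) : ℂ)‖ ≤ ‖u t x - x‖ / |t| * ‖y‖ := by
  rw [inner_smul_right, norm_mul, hu.inner_apply_neg_sub_self, norm_inv, Complex.norm_real,
    Real.norm_eq_abs, abs_neg, div_mul_eq_mul_div, inv_mul_eq_div]
  gcongr
  exact norm_inner_le_norm _ _

theorem IsGenerator.tendsto_norm_inner_diffQuot_neg {A : H →ₗ.[ℂ] H}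
    (hgen : IsGenerator u A) (x : H) {y : H} (hy : y ∈ A.domain) :
    Tendsto (fun t : ℝ => ‖(inner ℂ x (((-t : ℝ) : ℂ)⁻¹ • (u (-t) y - y)) : ℂ)‖) (𝓝[≠] 0)
      (𝓝 ‖(inner ℂ x (A ⟨y, hy⟩) : ℂ)‖) := by
  have h := ((tendsto_const_nhds (x := x)).inner (𝕜 := ℂ)
    ((hgen.2 y hy).comp (neg_zero (G := ℝ) ▸ tendsto_neg_nhdsNE 0))).norm
  rwa [inner_smul_right, norm_mul, Complex.norm_I, one_mul] at h

theorem IsOneParamUnitaryGroup.norm_inner_apply_le_limsup (hu : IsOneParamUnitaryGroup u)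
    {A : H →ₗ.[ℂ] H} (hgen : IsGenerator u A) {x : H}
    (hx : IsBoundedUnder (· ≤ ·) (𝓝[≠] (0 : ℝ)) fun t : ℝ => ‖u t x - x‖ / |t|)
    {y : H} (hy : y ∈ A.domain) :
    ‖(inner ℂ x (A ⟨y, hy⟩) : ℂ)‖ ≤
      limsup (fun t : ℝ => ‖u t x - x‖ / |t|) (𝓝[≠] (0 : ℝ)) * ‖y‖ :=
  le_limsup_mul_of_tendsto (hgen.tendsto_norm_inner_diffQuot_neg x hy) hx (norm_nonneg y)
    (.of_forall fun t => hu.norm_inner_diffQuot_neg_le t x y)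

end

/-- If `x` satisfies `limsup_{t→0} ‖(u(t) − 1)x‖/|t| < ∞`, then for every
`y ∈ dom A` one has `|⟨x, Ay⟩| ≤ (limsup_{t→0} ‖(u(t) − 1)x‖/|t|)·‖y‖`, and consequently
`x ∈ dom A* = dom A`. -/
theorem mem_domain_of_limsup_lt_top {H : Type*} [NormedAddCommGroup H]
    [InnerProductSpace ℂ H] [CompleteSpace H] (u : ℝ → (H →L[ℂ] H))
    (hu : IsOneParamUnitaryGroup u) (A : H →ₗ.[ℂ] H) (hA : IsSelfAdjoint A)
    (hgen : IsGenerator u A) (x : H)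
    (hx : IsBoundedUnder (· ≤ ·) (𝓝[≠] (0 : ℝ)) fun t : ℝ => ‖u t x - x‖ / |t|) :
    (∀ (y : H) (hy : y ∈ A.domain),
        ‖(inner ℂ x (A ⟨y, hy⟩) : ℂ)‖ ≤
          (limsup (fun t : ℝ => ‖u t x - x‖ / |t|) (𝓝[≠] (0 : ℝ))) * ‖y‖) ∧
      x ∈ A.adjoint.domain ∧ x ∈ A.domain := by
  have hbound : ∀ (y : H) (hy : y ∈ A.domain), ‖(inner ℂ x (A ⟨y, hy⟩) : ℂ)‖ ≤
      limsup (fun t : ℝ => ‖u t x - x‖ / |t|) (𝓝[≠] (0 : ℝ)) * ‖y‖ :=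
    fun _ hy => hu.norm_inner_apply_le_limsup hgen hx hy
  have hadj : x ∈ A.adjoint.domain :=
    LinearPMap.mem_adjoint_domain_of_norm_inner_le _ fun y => hbound y.1 y.2
  exact ⟨hbound, hadj, LinearPMap.isSelfAdjoint_def.mp hA ▸ hadj⟩
end
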